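/- arXiv:1710.09333 — 4 statements merged into one kernel-verified Lean document; each statement's English description precedes it below -/
import Mathlib

section
/- Let u : ℝ → ℝ be continuously differentiable with derivative u', and assume u and u' are square-integrable on ℝ. Then |u|^6 is integrable on ℝ and ∫_ℝ |u(x)|^6 dx ≤ (4/π²) · (∫_ℝ u(x)² dx)² · ∫_ℝ u'(x)² dx. (This is the sharp Gagliardo–Nirenberg inequality on ℝ at exponent p = 6, with optimal constant K = 3/μ_ℝ² = 4/π².) -/
/-! For `0 ≤ s` with `s ∫ u² < π / 2`, the function `h x = s tan (s (∫ u² - 2 ∫_{-∞}^x u²))` is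
bounded and solves the Riccati equation `h' = -2 (s² + h²) u²`. Completing the square,
`0 ≤ (u' - h u³)² = u'² - s² u⁶ - (u⁴ h / 2)'`, and `u⁴ h → 0` at `±∞`, so integrating gives
`s² ∫ u⁶ ≤ ∫ u'²`. Letting `s` increase to `π / (2 ∫ u²)` gives the sharp constant `4 / π²`. -/

open MeasureTheory Filter Set Topology Real

lemma measurable_of_forall_hasDerivAt {f f' : ℝ → ℝ} (hf : ∀ x, HasDerivAt f (f' x) x) :
    Measurable f' :=
  funext (fun x => (hf x).deriv) ▸ measurable_deriv f

lemma integrable_mul_of_integrable_sq {α : Type*} [MeasurableSpace α] {μ : Measure α}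
    {f g : α → ℝ} (hf : AEStronglyMeasurable f μ) (hg : AEStronglyMeasurable g μ)
    (hf2 : Integrable (fun x => f x ^ 2) μ) (hg2 : Integrable (fun x => g x ^ 2) μ) :
    Integrable (fun x => f x * g x) μ :=
  ((memLp_two_iff_integrable_sq hf).2 hf2).integrable_mul ((memLp_two_iff_integrable_sq hg).2 hg2)

lemma integral_abs_pow_eq_zero_of_integral_sq_eq_zero {α : Type*} [MeasurableSpace α]
    {μ : Measure α} {f : α → ℝ} (hf2 : Integrable (fun x => f x ^ 2) μ)
    (h : ∫ x, f x ^ 2 ∂μ = 0) {n : ℕ} (hn : n ≠ 0) : ∫ x, |f x| ^ n ∂μ = 0 := by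
  have hf : (fun x => f x ^ 2) =ᵐ[μ] 0 :=
    (integral_eq_zero_iff_of_nonneg (fun x => sq_nonneg (f x)) hf2).1 h
  refine integral_eq_zero_of_ae (hf.mono fun x hx => ?_)
  simp_all

lemma Continuous.exists_norm_le_of_tendsto_cocompact {E : Type*} [NormedAddCommGroup E]
    {f : ℝ → E} (hf : Continuous f) {a : E} (h : Tendsto f (cocompact ℝ) (𝓝 a)) :
    ∃ C, ∀ x, ‖f x‖ ≤ C := by
  obtain ⟨C, hC⟩ :=
    isBounded_iff_forall_norm_le.1 (hf.isBounded_range_iff_isBigO.2 (h.isBigO_one ℝ))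
  exact ⟨C, fun x => hC _ (mem_range_self x)⟩

lemma integral_le_integral_of_le_add_deriv {f g Φ Φ' : ℝ → ℝ} (hf : Integrable f)
    (hg : Integrable g) (hΦ : ∀ x, HasDerivAt Φ (Φ' x) x)
    (hΦ0 : Tendsto Φ (cocompact ℝ) (𝓝 0)) (hle : ∀ x, f x + Φ' x ≤ g x) :
    ∫ x, f x ≤ ∫ x, g x := by
  rw [← sub_nonneg, ← integral_sub hg hf]
  have hΦ0' : Tendsto (fun R => Φ R - Φ (-R)) atTop (𝓝 0) := by
    rw [cocompact_eq_atBot_atTop, tendsto_sup] at hΦ0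
    simpa using hΦ0.2.sub (hΦ0.1.comp tendsto_neg_atTop_atBot)
  refine le_of_tendsto_of_tendsto hΦ0'
    (intervalIntegral_tendsto_integral (hg.sub hf) tendsto_neg_atTop_atBot tendsto_id) ?_
  filter_upwards [eventually_ge_atTop 0] with R hR
  exact intervalIntegral.sub_le_integral_of_hasDeriv_right_of_le (by linarith)
    (continuous_iff_continuousAt.2 fun x => (hΦ x).continuousAt).continuousOn
    (fun x _ => (hΦ x).hasDerivWithinAt) (hg.sub hf).integrableOn fun x _ => by linarith [hle x]

lemma sq_mul_le_of_forall_mem_Ioo {a b L : ℝ} (hL : 0 < L) (h : ∀ s ∈ Ioo 0 L, s ^ 2 * a ≤ b) :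
    L ^ 2 * a ≤ b := by
  have hclosed : IsClosed {s : ℝ | s ^ 2 * a ≤ b} := isClosed_le (by fun_prop) continuous_const
  have := hclosed.closure_subset_iff.2 h
  rw [closure_Ioo hL.ne] at this
  exact this ⟨hL.le, le_rfl⟩

lemma hasDerivAt_integral_Iic {w : ℝ → ℝ} (hw : Continuous w) (hwi : Integrable w) (x : ℝ) :
    HasDerivAt (fun y => ∫ t in Iic y, w t) (w x) x := by
  have hsplit : (fun y => ∫ t in Iic y, w t) = fun y => (∫ t in Iic 0, w t) + ∫ t in 0..y, w t :=
    funext fun y => by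
      rw [← intervalIntegral.integral_Iic_sub_Iic hwi.integrableOn hwi.integrableOn]; ring
  rw [hsplit]
  exact (hw.integral_hasStrictDerivAt 0 x).hasDerivAt.const_add _

lemma exists_bounded_riccati_multiplier {w : ℝ → ℝ} (hw : Continuous w) (hw0 : ∀ x, 0 ≤ w x)
    (hwi : Integrable w) {s : ℝ} (hs : 0 ≤ s) (hsm : s * ∫ x, w x < π / 2) :
    ∃ h : ℝ → ℝ, (∃ M, ∀ x, |h x| ≤ M) ∧
      ∀ x, HasDerivAt h (-2 * (s ^ 2 + h x ^ 2) * w x) x := by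
  set m := ∫ x, w x
  set θ : ℝ → ℝ := fun x => s * (m - 2 * ∫ t in Iic x, w t)
  have hθ_mem : ∀ x, θ x ∈ Icc (-(s * m)) (s * m) := fun x => by
    have h0 : 0 ≤ ∫ t in Iic x, w t := setIntegral_nonneg measurableSet_Iic fun t _ => hw0 t
    have hm : ∫ t in Iic x, w t ≤ m := setIntegral_le_integral hwi (.of_forall hw0)
    constructor <;> nlinarith
  have hIcc : Icc (-(s * m)) (s * m) ⊆ Ioo (-(π / 2)) (π / 2) :=
    Icc_subset_Ioo (by linarith) hsm
  have hcos : ∀ x, cos (θ x) ≠ 0 := fun x => (cos_pos_of_mem_Ioo (hIcc (hθ_mem x))).ne'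
  obtain ⟨M, hM⟩ := isCompact_Icc.exists_bound_of_continuousOn (continuousOn_tan_Ioo.mono hIcc)
  refine ⟨fun x => s * tan (θ x), ⟨s * M, fun x => ?_⟩, fun x => ?_⟩
  · rw [abs_mul, abs_of_nonneg hs]
    exact mul_le_mul_of_nonneg_left (hM _ (hθ_mem x)) hs
  · have hθ' : HasDerivAt θ (s * (0 - 2 * w x)) x :=
      ((hasDerivAt_const x m).sub ((hasDerivAt_integral_Iic hw hwi x).const_mul 2)).const_mul s
    refine (((hasDerivAt_tan (hcos x)).comp x hθ').const_mul s).congr_deriv ?_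
    rw [← inv_one_add_tan_sq (hcos x)]
    field_simp
    ring

section

variable {u u' : ℝ → ℝ}

lemma tendsto_sq_cocompact_of_integrable_sq (hderiv : ∀ x, HasDerivAt u (u' x) x)
    (hu2 : Integrable (fun x => u x ^ 2)) (hu'2 : Integrable (fun x => u' x ^ 2)) :
    Tendsto (fun x => u x ^ 2) (cocompact ℝ) (𝓝 0) := by
  have hu : Continuous u := continuous_iff_continuousAt.2 fun x => (hderiv x).continuousAt
  have hderiv2 : ∀ x, HasDerivAt (fun y => u y ^ 2) (2 * (u x * u' x)) x := fun x => by
    simpa [mul_assoc] using (hderiv x).fun_pow 2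
  have hint : Integrable (fun x => 2 * (u x * u' x)) :=
    (integrable_mul_of_integrable_sq hu.aestronglyMeasurable
      (measurable_of_forall_hasDerivAt hderiv).aestronglyMeasurable hu2 hu'2).const_mul 2
  rw [cocompact_eq_atBot_atTop, tendsto_sup]
  exact ⟨tendsto_zero_of_hasDerivAt_of_integrableOn_Iic (a := 0) (fun x _ => hderiv2 x)
      hint.integrableOn hu2.integrableOn,
    tendsto_zero_of_hasDerivAt_of_integrableOn_Ioi (a := 0) (fun x _ => hderiv2 x)
      hint.integrableOn hu2.integrableOn⟩

lemma integrable_abs_pow_six (hu : Continuous u)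
    (hu0 : Tendsto (fun x => u x ^ 2) (cocompact ℝ) (𝓝 0))
    (hu2 : Integrable (fun x => u x ^ 2)) : Integrable (fun x => |u x| ^ 6) := by
  obtain ⟨B, hB⟩ := (hu.pow 2).exists_norm_le_of_tendsto_cocompact hu0
  have hfactor : (fun x => |u x| ^ 6) = fun x => (u x ^ 2) ^ 2 * u x ^ 2 :=
    funext fun x => by rw [(by decide : Even 6).pow_abs]; ring
  rw [hfactor]
  refine hu2.bdd_mul (c := B ^ 2) (by fun_prop) (.of_forall fun x => ?_)
  rw [norm_pow]
  exact pow_le_pow_left₀ (norm_nonneg _) (hB x) 2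

lemma sq_mul_integral_abs_pow_six_le (hderiv : ∀ x, HasDerivAt u (u' x) x)
    (hu2 : Integrable (fun x => u x ^ 2)) (hu'2 : Integrable (fun x => u' x ^ 2))
    {s : ℝ} (hs : 0 ≤ s) (hsm : s * ∫ x, u x ^ 2 < π / 2) :
    s ^ 2 * ∫ x, |u x| ^ 6 ≤ ∫ x, u' x ^ 2 := by
  have hu : Continuous u := continuous_iff_continuousAt.2 fun x => (hderiv x).continuousAt
  have hu0 := tendsto_sq_cocompact_of_integrable_sq hderiv hu2 hu'2
  obtain ⟨h, ⟨M, hM⟩, hh⟩ :=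
    exists_bounded_riccati_multiplier (by fun_prop) (fun x => sq_nonneg (u x)) hu2 hs hsm
  have hΦ : ∀ x, HasDerivAt (fun y => (u y ^ 2) ^ 2 * h y / 2)
      ((2 * u x ^ 3 * u' x) * h x - (s ^ 2 + h x ^ 2) * u x ^ 6) x := fun x => by
    refine ((((hderiv x).fun_pow 2).fun_pow 2).mul (hh x)).div_const 2 |>.congr_deriv ?_
    push_cast
    ring
  have hΦ0 : Tendsto (fun y => (u y ^ 2) ^ 2 * h y / 2) (cocompact ℝ) (𝓝 0) := by
    have hu0' : Tendsto (fun y => (u y ^ 2) ^ 2) (cocompact ℝ) (𝓝 0) := by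
      simpa only [zero_pow two_ne_zero] using hu0.pow 2
    simpa using (hu0'.zero_mul_isBoundedUnder_le (isBoundedUnder_of ⟨M, hM⟩)).div_const 2
  rw [← integral_const_mul]
  refine integral_le_integral_of_le_add_deriv
    ((integrable_abs_pow_six hu hu0 hu2).const_mul _) hu'2 hΦ hΦ0 fun x => ?_
  rw [(by decide : Even 6).pow_abs]
  nlinarith [sq_nonneg (u' x - h x * u x ^ 3)]

end

theorem gagliardo_nirenberg_line_critical_general
    (u u' : ℝ → ℝ)
    (hderiv : ∀ x, HasDerivAt u (u' x) x)
    (hu2 : Integrable (fun x => u x ^ 2))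
    (hu'2 : Integrable (fun x => u' x ^ 2)) :
    Integrable (fun x => |u x| ^ 6) ∧
      ∫ x, |u x| ^ 6 ≤
        (4 / Real.pi ^ 2) * (∫ x, u x ^ 2) ^ 2 * ∫ x, u' x ^ 2 := by
  have hu : Continuous u := continuous_iff_continuousAt.2 fun x => (hderiv x).continuousAt
  refine ⟨integrable_abs_pow_six hu (tendsto_sq_cocompact_of_integrable_sq hderiv hu2 hu'2) hu2,
    ?_⟩
  set m := ∫ x, u x ^ 2
  have hm0 : 0 ≤ m := integral_nonneg fun x => sq_nonneg (u x)
  rcases hm0.eq_or_lt with hm | hm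
  · rw [integral_abs_pow_eq_zero_of_integral_sq_eq_zero hu2 hm.symm (by norm_num), ← hm]
    simp
  · have key := sq_mul_le_of_forall_mem_Ioo (L := π / (2 * m)) (by positivity) fun s hs =>
      sq_mul_integral_abs_pow_six_le hderiv hu2 hu'2 hs.1.le
        (by have := (lt_div_iff₀ (by positivity)).1 hs.2; linarith)
    calc ∫ x, |u x| ^ 6 = 4 / π ^ 2 * m ^ 2 * ((π / (2 * m)) ^ 2 * ∫ x, |u x| ^ 6) := by
          field_simp; ring
      _ ≤ 4 / π ^ 2 * m ^ 2 * ∫ x, u' x ^ 2 := by gcongr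

/-- Sharp Gagliardo–Nirenberg inequality on ℝ at exponent 6:
if `u` is continuously differentiable with derivative `u'`, and `u`, `u'` are
square-integrable on ℝ, then `|u|^6` is integrable and
`∫ |u|^6 ≤ (4/π²) (∫ u²)² ∫ u'²`. -/
theorem gagliardo_nirenberg_line_critical
    (u u' : ℝ → ℝ)
    (hderiv : ∀ x, HasDerivAt u (u' x) x)
    (hcont : Continuous u')
    (hu2 : Integrable (fun x => u x ^ 2))
    (hu'2 : Integrable (fun x => u' x ^ 2)) :
    Integrable (fun x => |u x| ^ 6) ∧
      ∫ x, |u x| ^ 6 ≤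
        (4 / Real.pi ^ 2) * (∫ x, u x ^ 2) ^ 2 * ∫ x, u' x ^ 2 :=
  gagliardo_nirenberg_line_critical_general u u' hderiv hu2 hu'2
end

section
/- Let u : ℝ → ℝ be continuously differentiable with derivative u', and assume u and u' are square-integrable on the half-line [0,∞). Then |u|^6 is integrable on [0,∞) and ∫_0^∞ |u(x)|^6 dx ≤ (16/π²) · (∫_0^∞ u(x)² dx)² · ∫_0^∞ u'(x)² dx. (This is the sharp Gagliardo–Nirenberg inequality on ℝ⁺ at exponent p = 6, with optimal constant K = 3/μ_{ℝ⁺}² = 16/π².) -/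
open MeasureTheory Filter Set Real

/-!
Write `M x = ∫_x^∞ u²`, `E x = ∫_x^∞ u'²` and `k = π / (2 M 0)`, so that the angle `θ = k M`
decreases from `π/2` with `θ' = -k u²`. For `g = u⁴ cot θ`, completing a square gives
`k² u⁶ ≤ 4 u'² + k g'`, hence `k² ∫₀^R u⁶ ≤ 4 ∫₀^R u'² + k g R` because `g 0 = 0`.
Agmon's inequality `u⁴ ≤ 4 M E` (Cauchy–Schwarz with an optimised weight applied to
`u² = -∫_x^∞ 2 u u'`) together with `θ cot θ ≤ 1` bounds the boundary term by `4 E R`, so that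
`k² ∫₀^R u⁶ ≤ 4 E 0`, which is the claim on `[0, R]`. This holds as long as `M R > 0`; past the
first zero of `M` the function `u` vanishes, and `R → ∞` gives the inequality on the half-line.
-/

theorem sq_le_four_mul_mul_of_forall_mul_le {A M E : ℝ} (hA : 0 ≤ A) (hM : 0 ≤ M) (hE : 0 ≤ E)
    (h : ∀ ε > 0, A * ε ≤ M * ε ^ 2 + E) : A ^ 2 ≤ 4 * M * E := by
  have hquad : ∀ ε : ℝ, 0 ≤ M * (ε * ε) + -A * ε + E := by
    intro ε
    rcases lt_or_ge 0 ε with hε | hε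
    · nlinarith [h ε hε]
    · nlinarith [mul_nonneg hA (neg_nonneg.2 hε), mul_self_nonneg ε]
  have := discrim_le_zero hquad
  rw [discrim, neg_sq] at this
  linarith

theorem mul_cot_le_one {θ : ℝ} (h0 : 0 < θ) (hθ : θ ≤ π / 2) : θ * cot θ ≤ 1 := by
  rw [cot_eq_cos_div_sin, mul_div_assoc', div_le_one (sin_pos_of_pos_of_lt_pi h0 (by linarith))]
  rcases hθ.lt_or_eq with hθ | rfl
  · have hcos := cos_pos_of_mem_Ioo ⟨by linarith, hθ⟩
    have := le_tan h0.le hθ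
    rwa [tan_eq_sin_div_cos, le_div_iff₀ hcos] at this
  · simp

theorem mul_pow_four_mul_cot_le {k m v e : ℝ} (hm : 0 < m) (hkm : 0 < k * m)
    (hkm' : k * m ≤ π / 2) (hv : v ^ 4 ≤ 4 * m * e) : k * (v ^ 4 * cot (k * m)) ≤ 4 * e := by
  refine le_of_mul_le_mul_right ?_ hm
  calc k * (v ^ 4 * cot (k * m)) * m = v ^ 4 * (k * m * cot (k * m)) := by ring
    _ ≤ v ^ 4 := mul_le_of_le_one_right (by positivity) (mul_cot_le_one hkm hkm')
    _ ≤ 4 * e * m := by linarith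

theorem hasDerivAt_cot {x : ℝ} (hx : sin x ≠ 0) : HasDerivAt cot (-(1 + cot x ^ 2)) x := by
  have h : HasDerivAt (fun y => cos y / sin y)
      ((-sin x * sin x - cos x * cos x) / sin x ^ 2) x :=
    (hasDerivAt_cos x).div (hasDerivAt_sin x) hx
  rw [show cot = fun y => cos y / sin y from funext cot_eq_cos_div_sin]
  convert h using 1
  beta_reduce
  field_simp
  ring

theorem integral_Ioi_le_integral_Ioi {f : ℝ → ℝ} {a x : ℝ} (hf : IntegrableOn f (Ioi a))
    (hnn : ∀ t, 0 ≤ f t) (hx : a ≤ x) : ∫ t in Ioi x, f t ≤ ∫ t in Ioi a, f t :=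
  setIntegral_mono_set hf (ae_of_all _ hnn) (Ioi_subset_Ioi hx).eventuallyLE

theorem continuousOn_integral_Ioi {f : ℝ → ℝ} {a : ℝ} (hf : Continuous f)
    (hfi : IntegrableOn f (Ioi a)) : ContinuousOn (fun x => ∫ t in Ioi x, f t) (Ici a) := by
  refine ContinuousOn.congr (f := fun x => (∫ t in Ioi a, f t) - ∫ t in a..x, f t) ?_
    fun x hx => ?_
  · exact (continuous_const.sub (intervalIntegral.continuous_primitive
      (fun _ _ => hf.intervalIntegrable _ _) a)).continuousOn
  · linarith [intervalIntegral.integral_Ioi_sub_Ioi hfi hx]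

theorem le_of_le_on_pos_of_eq_on_nonpos {F M : ℝ → ℝ} {a R c : ℝ}
    (hF : ContinuousOn F (Icc a R)) (hM : ContinuousOn M (Icc a R)) (hMa : 0 < M a)
    (hR : a ≤ R) (hpos : ∀ r ∈ Icc a R, 0 < M r → F r ≤ c)
    (hstop : ∀ x ∈ Icc a R, M x ≤ 0 → F R = F x) : F R ≤ c := by
  by_cases hMR : 0 < M R
  · exact hpos R ⟨hR, le_rfl⟩ hMR
  set K := Icc a R ∩ M ⁻¹' Iic 0
  have hK : IsCompact K :=
    isCompact_Icc.of_isClosed_subset (hM.preimage_isClosed_of_isClosed isClosed_Icc isClosed_Iic)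
      inter_subset_left
  have hT : sInf K ∈ K := hK.sInf_mem ⟨R, ⟨hR, le_rfl⟩, not_lt.1 hMR⟩
  have haT : a < sInf K := lt_of_le_of_ne hT.1.1 fun h => (h ▸ hT.2 : M a ≤ 0).not_gt hMa
  have hle : ∀ r ∈ Ico a (sInf K), F r ≤ c := fun r hr =>
    hpos r ⟨hr.1, hr.2.le.trans hT.1.2⟩ <| not_le.1 fun hMr =>
      (csInf_le hK.bddBelow ⟨⟨hr.1, hr.2.le.trans hT.1.2⟩, hMr⟩).not_gt hr.2
  rw [hstop _ hT.1 hT.2]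
  have hcl : closure (Ico a (sInf K)) ⊆ Icc a R := by
    rw [closure_Ico haT.ne]; exact Icc_subset_Icc_right hT.1.2
  exact le_on_closure hle (hF.mono hcl) continuousOn_const
    (by rw [closure_Ico haT.ne]; exact right_mem_Icc.2 haT.le)

theorem sq_mul_intervalIntegral_pow_six_le {u u' θ : ℝ → ℝ} {k a b : ℝ} (hab : a ≤ b)
    (hderiv : ∀ x, HasDerivAt u (u' x) x) (hcont : Continuous u')
    (hθ : ∀ x, HasDerivAt θ (-(k * u x ^ 2)) x) (hsin : ∀ x ∈ Icc a b, sin (θ x) ≠ 0) :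
    k ^ 2 * ∫ x in a..b, u x ^ 6 ≤
      4 * (∫ x in a..b, u' x ^ 2) + k * (u b ^ 4 * cot (θ b) - u a ^ 4 * cot (θ a)) := by
  have hucont : Continuous u := Differentiable.continuous fun x => (hderiv x).differentiableAt
  set G : ℝ → ℝ := fun x => 4 * u x ^ 3 * u' x * cot (θ x) + k * u x ^ 6 * (1 + cot (θ x) ^ 2)
  have hcot : ContinuousOn (fun x => cot (θ x)) (Icc a b) := fun x hx =>
    ((hasDerivAt_cot (hsin x hx)).continuousAt.comp (hθ x).continuousAt).continuousWithinAt
  have hG : ∀ x ∈ uIcc a b, HasDerivAt (fun x => u x ^ 4 * cot (θ x)) (G x) x := by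
    intro x hx
    rw [uIcc_of_le hab] at hx
    refine (((hderiv x).fun_pow 4).mul
      ((hasDerivAt_cot (hsin x hx)).comp x (hθ x))).congr_deriv ?_
    simp only [G, Function.comp_apply]
    push_cast
    ring
  have hGint : IntervalIntegrable G volume a b := by
    refine ContinuousOn.intervalIntegrable ?_
    rw [uIcc_of_le hab]
    exact ((((continuous_const.mul (hucont.pow 3)).mul hcont).continuousOn).mul hcot).add
      ((continuous_const.mul (hucont.pow 6)).continuousOn.mul (continuousOn_const.add (hcot.pow 2)))
  have hu'int : IntervalIntegrable (fun x => 4 * u' x ^ 2) volume a b :=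
    (continuous_const.mul (hcont.pow 2)).intervalIntegrable a b
  -- completing the square: `4 u'² + k G - k² u⁶ = (2 u' + k u³ cot θ)²`
  have hpt : ∀ x ∈ Icc a b, k ^ 2 * u x ^ 6 ≤ 4 * u' x ^ 2 + k * G x := fun x _ => by
    nlinarith [sq_nonneg (2 * u' x + k * u x ^ 3 * cot (θ x))]
  calc k ^ 2 * ∫ x in a..b, u x ^ 6 = ∫ x in a..b, k ^ 2 * u x ^ 6 :=
        (intervalIntegral.integral_const_mul _ _).symm
    _ ≤ ∫ x in a..b, (4 * u' x ^ 2 + k * G x) :=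
        intervalIntegral.integral_mono_on hab
          ((continuous_const.mul (hucont.pow 6)).intervalIntegrable a b)
          (hu'int.add (hGint.const_mul k)) hpt
    _ = _ := by
        rw [intervalIntegral.integral_add hu'int (hGint.const_mul k),
          intervalIntegral.integral_const_mul, intervalIntegral.integral_const_mul,
          intervalIntegral.integral_eq_sub_of_hasDerivAt hG hGint]

section HalfLine

variable {u u' : ℝ → ℝ}

theorem pow_four_le_four_mul_integral_Ioi_mul {a : ℝ} (hderiv : ∀ x, HasDerivAt u (u' x) x)
    (hcont : Continuous u') (hu : IntegrableOn (fun x => u x ^ 2) (Ioi a))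
    (hu' : IntegrableOn (fun x => u' x ^ 2) (Ioi a)) :
    u a ^ 4 ≤ 4 * (∫ x in Ioi a, u x ^ 2) * ∫ x in Ioi a, u' x ^ 2 := by
  have hucont : Continuous u := Differentiable.continuous fun x => (hderiv x).differentiableAt
  have hsq : ∀ x, HasDerivAt (fun y => u y ^ 2) (2 * u x * u' x) x := fun x => by
    refine ((hderiv x).fun_pow 2).congr_deriv ?_
    push_cast
    ring
  have hint : IntegrableOn (fun x => 2 * u x * u' x) (Ioi a) := by
    refine (hu.add hu').mono' ((continuous_const.mul hucont).mul hcont).aestronglyMeasurable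
      (ae_of_all _ fun x => ?_)
    rw [Pi.add_apply, Real.norm_eq_abs, abs_le]
    constructor <;> nlinarith [sq_nonneg (u x + u' x), sq_nonneg (u x - u' x)]
  have hftc : ∫ x in Ioi a, 2 * u x * u' x = 0 - u a ^ 2 :=
    integral_Ioi_of_hasDerivAt_of_tendsto' (fun x _ => hsq x) hint
      (tendsto_zero_of_hasDerivAt_of_integrableOn_Ioi (fun x _ => hsq x) hint hu)
  rw [show u a ^ 4 = (u a ^ 2) ^ 2 by ring]
  refine sq_le_four_mul_mul_of_forall_mul_le (sq_nonneg _)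
    (setIntegral_nonneg measurableSet_Ioi fun x _ => sq_nonneg (u x))
    (setIntegral_nonneg measurableSet_Ioi fun x _ => sq_nonneg (u' x)) fun ε _ => ?_
  calc u a ^ 2 * ε = ∫ x in Ioi a, -(2 * u x * u' x) * ε := by
        rw [integral_mul_const, integral_neg, hftc]; ring
    _ ≤ ∫ x in Ioi a, (u x ^ 2 * ε ^ 2 + u' x ^ 2) :=
        setIntegral_mono (hint.neg.mul_const ε) (by exact (hu.mul_const (ε ^ 2)).add hu')
          fun x => by nlinarith [sq_nonneg (u x * ε + u' x)]
    _ = (∫ x in Ioi a, u x ^ 2) * ε ^ 2 + ∫ x in Ioi a, u' x ^ 2 := by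
        rw [integral_add (hu.mul_const _) hu', integral_mul_const]

theorem eq_zero_of_integral_Ioi_sq_nonpos {a : ℝ} (hderiv : ∀ x, HasDerivAt u (u' x) x)
    (hcont : Continuous u') (hu : IntegrableOn (fun x => u x ^ 2) (Ioi a))
    (hu' : IntegrableOn (fun x => u' x ^ 2) (Ioi a)) (hM : ∫ x in Ioi a, u x ^ 2 ≤ 0)
    {x : ℝ} (hx : a ≤ x) : u x = 0 := by
  have hagmon := pow_four_le_four_mul_integral_Ioi_mul hderiv hcont
    (hu.mono_set (Ioi_subset_Ioi hx)) (hu'.mono_set (Ioi_subset_Ioi hx))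
  have hMx : ∫ t in Ioi x, u t ^ 2 = 0 :=
    le_antisymm ((integral_Ioi_le_integral_Ioi hu (fun t => sq_nonneg _) hx).trans hM)
      (setIntegral_nonneg measurableSet_Ioi fun t _ => sq_nonneg (u t))
  rw [hMx, mul_zero, zero_mul] at hagmon
  exact pow_eq_zero_iff (n := 4) (by norm_num) |>.1 (le_antisymm hagmon (by positivity))

theorem intervalIntegral_pow_six_eq_of_integral_Ioi_sq_nonpos {x : ℝ}
    (hderiv : ∀ x, HasDerivAt u (u' x) x) (hcont : Continuous u')
    (hu : IntegrableOn (fun t => u t ^ 2) (Ioi x)) (hu' : IntegrableOn (fun t => u' t ^ 2) (Ioi x))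
    (hM : ∫ t in Ioi x, u t ^ 2 ≤ 0) (a : ℝ) {R : ℝ} (hxR : x ≤ R) :
    ∫ t in a..R, u t ^ 6 = ∫ t in a..x, u t ^ 6 := by
  have hu6 : Continuous fun t => u t ^ 6 :=
    (Differentiable.continuous fun x => (hderiv x).differentiableAt).pow 6
  have hzero : EqOn (fun t => u t ^ 6) (fun _ => 0) (uIcc x R) := fun t ht => by
    rw [uIcc_of_le hxR] at ht
    simp [eq_zero_of_integral_Ioi_sq_nonpos hderiv hcont hu hu' hM ht.1]
  rw [← intervalIntegral.integral_add_adjacent_intervals (hu6.intervalIntegrable a x)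
    (hu6.intervalIntegrable x R), intervalIntegral.integral_congr hzero,
    intervalIntegral.integral_zero, add_zero]

theorem integrableOn_Ioi_pow_six {a : ℝ} (hderiv : ∀ x, HasDerivAt u (u' x) x)
    (hcont : Continuous u') (hu : IntegrableOn (fun x => u x ^ 2) (Ioi a))
    (hu' : IntegrableOn (fun x => u' x ^ 2) (Ioi a)) :
    IntegrableOn (fun x => u x ^ 6) (Ioi a) := by
  have hucont : Continuous u := Differentiable.continuous fun x => (hderiv x).differentiableAt
  set B := ∫ x in Ioi a, u x ^ 2
  set C := ∫ x in Ioi a, u' x ^ 2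
  refine (hu.const_mul (4 * B * C)).mono' (hucont.pow 6).aestronglyMeasurable
    (ae_restrict_of_forall_mem measurableSet_Ioi fun x hx => ?_)
  have hx : a ≤ x := le_of_lt hx
  have hagmon := pow_four_le_four_mul_integral_Ioi_mul hderiv hcont
    (hu.mono_set (Ioi_subset_Ioi hx)) (hu'.mono_set (Ioi_subset_Ioi hx))
  have hMB := integral_Ioi_le_integral_Ioi hu (fun t => sq_nonneg _) hx
  have hEC := integral_Ioi_le_integral_Ioi hu' (fun t => sq_nonneg _) hx
  have hM0 : 0 ≤ ∫ t in Ioi x, u t ^ 2 :=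
    setIntegral_nonneg measurableSet_Ioi fun t _ => sq_nonneg _
  have hE0 : 0 ≤ ∫ t in Ioi x, u' t ^ 2 :=
    setIntegral_nonneg measurableSet_Ioi fun t _ => sq_nonneg _
  rw [Real.norm_of_nonneg (by positivity)]
  calc u x ^ 6 = u x ^ 4 * u x ^ 2 := by ring
    _ ≤ 4 * B * C * u x ^ 2 := by
        gcongr
        calc u x ^ 4 ≤ _ := hagmon
          _ ≤ 4 * B * C := by gcongr

theorem pi_sq_mul_intervalIntegral_pow_six_le {a R : ℝ} (hderiv : ∀ x, HasDerivAt u (u' x) x)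
    (hcont : Continuous u') (hu : IntegrableOn (fun x => u x ^ 2) (Ioi a))
    (hu' : IntegrableOn (fun x => u' x ^ 2) (Ioi a)) (hR : a ≤ R)
    (hpos : 0 < ∫ x in Ioi R, u x ^ 2) :
    π ^ 2 * ∫ x in a..R, u x ^ 6 ≤
      16 * (∫ x in Ioi a, u x ^ 2) ^ 2 * ∫ x in Ioi a, u' x ^ 2 := by
  have hucont : Continuous u := Differentiable.continuous fun x => (hderiv x).differentiableAt
  set B := ∫ x in Ioi a, u x ^ 2
  set M : ℝ → ℝ := fun x => ∫ t in Ioi x, u t ^ 2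
  have hB : 0 < B := hpos.trans_le (integral_Ioi_le_integral_Ioi hu (fun t => sq_nonneg _) hR)
  set k := π / (2 * B)
  have hk : 0 < k := by positivity
  have hkB : k * B = π / 2 := by simp only [k]; field_simp
  -- `θ = k M` on `[a, ∞)`, written through the primitive so that it is differentiable everywhere
  set θ : ℝ → ℝ := fun x => k * (B - ∫ t in a..x, u t ^ 2)
  have hθ : ∀ x, HasDerivAt θ (-(k * u x ^ 2)) x := fun x => by
    simpa using (((hucont.pow 2).integral_hasStrictDerivAt a x).hasDerivAt.const_sub B).const_mul k
  have hθM : ∀ x, a ≤ x → θ x = k * M x := fun x hx => by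
    simp only [θ, M, ← intervalIntegral.integral_Ioi_sub_Ioi hu hx]
    exact congrArg (k * ·) (sub_sub_cancel _ _)
  have hθmem : ∀ x ∈ Icc a R, 0 < θ x ∧ θ x ≤ π / 2 := by
    intro x hx
    rw [hθM x hx.1]
    refine ⟨mul_pos hk (hpos.trans_le (integral_Ioi_le_integral_Ioi
      (hu.mono_set (Ioi_subset_Ioi hx.1)) (fun t => sq_nonneg _) hx.2)), ?_⟩
    calc k * M x ≤ k * B := by
          gcongr; exact integral_Ioi_le_integral_Ioi hu (fun t => sq_nonneg _) hx.1
      _ = π / 2 := hkB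
  have hmain := sq_mul_intervalIntegral_pow_six_le hR hderiv hcont hθ fun x hx =>
    (sin_pos_of_pos_of_lt_pi (hθmem x hx).1 (by linarith [(hθmem x hx).2, pi_pos])).ne'
  have hθa : cot (θ a) = 0 := by
    rw [show θ a = π / 2 by simp [θ, hkB], cot_eq_cos_div_sin, cos_pi_div_two, zero_div]
  have hbdry : k * (u R ^ 4 * cot (θ R)) ≤ 4 * ∫ x in Ioi R, u' x ^ 2 := by
    have hθR := hθmem R ⟨hR, le_rfl⟩
    rw [hθM R hR] at hθR ⊢
    exact mul_pow_four_mul_cot_le hpos hθR.1 hθR.2 <| pow_four_le_four_mul_integral_Ioi_mul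
      hderiv hcont (hu.mono_set (Ioi_subset_Ioi hR)) (hu'.mono_set (Ioi_subset_Ioi hR))
  have hsplit := intervalIntegral.integral_interval_add_Ioi hu' (hu'.mono_set (Ioi_subset_Ioi hR))
  rw [hθa, mul_zero, sub_zero] at hmain
  calc π ^ 2 * ∫ x in a..R, u x ^ 6 = 4 * B ^ 2 * (k ^ 2 * ∫ x in a..R, u x ^ 6) := by
        rw [show π = 2 * (k * B) by linarith]; ring
    _ ≤ 4 * B ^ 2 * (4 * ∫ x in Ioi a, u' x ^ 2) :=
        mul_le_mul_of_nonneg_left (by linarith) (by positivity)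
    _ = _ := by ring

theorem pi_sq_mul_integral_Ioi_pow_six_le {a : ℝ} (hderiv : ∀ x, HasDerivAt u (u' x) x)
    (hcont : Continuous u') (hu : IntegrableOn (fun x => u x ^ 2) (Ioi a))
    (hu' : IntegrableOn (fun x => u' x ^ 2) (Ioi a)) :
    π ^ 2 * ∫ x in Ioi a, u x ^ 6 ≤
      16 * (∫ x in Ioi a, u x ^ 2) ^ 2 * ∫ x in Ioi a, u' x ^ 2 := by
  have hucont : Continuous u := Differentiable.continuous fun x => (hderiv x).differentiableAt
  rcases (setIntegral_nonneg measurableSet_Ioi fun x _ => sq_nonneg (u x) :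
    0 ≤ ∫ x in Ioi a, u x ^ 2).eq_or_lt with hB | hB
  · rw [setIntegral_eq_zero_of_forall_eq_zero fun x hx => by
      rw [eq_zero_of_integral_Ioi_sq_nonpos hderiv hcont hu hu' hB.ge (le_of_lt hx),
        zero_pow (by norm_num)], ← hB]
    simp
  refine le_of_tendsto ((intervalIntegral_tendsto_integral_Ioi a
    (integrableOn_Ioi_pow_six hderiv hcont hu hu') tendsto_id).const_mul _)
    ((eventually_ge_atTop a).mono fun R hR => ?_)
  refine le_of_le_on_pos_of_eq_on_nonpos (F := fun r => π ^ 2 * ∫ x in a..r, u x ^ 6)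
    (continuous_const.mul (intervalIntegral.continuous_primitive
      (fun _ _ => (hucont.pow 6).intervalIntegrable _ _) a)).continuousOn
    ((continuousOn_integral_Ioi (hucont.pow 2) hu).mono Icc_subset_Ici_self) hB hR
    (fun r hr => pi_sq_mul_intervalIntegral_pow_six_le hderiv hcont hu hu' hr.1)
    fun x hx hMx => ?_
  rw [intervalIntegral_pow_six_eq_of_integral_Ioi_sq_nonpos hderiv hcont
    (hu.mono_set (Ioi_subset_Ioi hx.1)) (hu'.mono_set (Ioi_subset_Ioi hx.1)) hMx a hx.2]

end HalfLine

/-- Sharp Gagliardo–Nirenberg inequality on the half-line ℝ⁺ at exponent 6: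
if `u` is continuously differentiable with derivative `u'`, and `u`, `u'` are
square-integrable on `[0,∞)`, then `|u|^6` is integrable on `[0,∞)` and
`∫_0^∞ |u|^6 ≤ (16/π²) (∫_0^∞ u²)² ∫_0^∞ u'²`. -/
theorem gagliardo_nirenberg_halfline_critical
    (u u' : ℝ → ℝ)
    (hderiv : ∀ x, HasDerivAt u (u' x) x)
    (hcont : Continuous u')
    (hu2 : IntegrableOn (fun x => u x ^ 2) (Set.Ici 0))
    (hu'2 : IntegrableOn (fun x => u' x ^ 2) (Set.Ici 0)) :
    IntegrableOn (fun x => |u x| ^ 6) (Set.Ici 0) ∧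
      ∫ x in Set.Ici (0 : ℝ), |u x| ^ 6 ≤
        (16 / Real.pi ^ 2) * (∫ x in Set.Ici (0 : ℝ), u x ^ 2) ^ 2 *
          ∫ x in Set.Ici (0 : ℝ), u' x ^ 2 := by
  have habs : (fun x => |u x| ^ 6) = fun x => u x ^ 6 :=
    funext fun x => Even.pow_abs ⟨3, rfl⟩ (u x)
  simp only [habs, integral_Ici_eq_integral_Ioi]
  rw [integrableOn_Ici_iff_integrableOn_Ioi] at hu2 hu'2 ⊢
  refine ⟨integrableOn_Ioi_pow_six hderiv hcont hu2 hu'2, ?_⟩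
  have hmain := pi_sq_mul_integral_Ioi_pow_six_le hderiv hcont hu2 hu'2
  rw [div_mul_eq_mul_div, div_mul_eq_mul_div, le_div_iff₀ (by positivity)]
  linarith
end

section
/- For every λ > 0, the critical soliton φ_λ has zero NLS energy at exponent 6 on ℝ: (1/2)∫_ℝ φ_λ'(x)² dx − (1/6)∫_ℝ φ_λ(x)^6 dx = 0, where φ_λ' denotes the derivative of φ_λ. In particular ∫_ℝ φ_λ'(x)² dx = √3·λ·π/4 and ∫_ℝ φ_λ(x)^6 dx = 3√3·λ·π/4. -/
open MeasureTheory

/-- The critical soliton `φ_λ(x) = (3λ)^{1/4} (cosh(2√λ x))^{-1/2}`. -/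
noncomputable def criticalSoliton (lam : ℝ) : ℝ → ℝ :=
  fun x => (3 * lam) ^ ((1 : ℝ) / 4) * Real.cosh (2 * Real.sqrt lam * x) ^ (-(1 : ℝ) / 2)

/-!
With `μ = 2√λ`, one has `φ_λ'(x)² = √(3λ) λ (sech(μx) - sech³(μx))` and
`φ_λ(x)⁶ = 3λ √(3λ) sech³(μx)`, so everything reduces to `∫ sech = π`, with antiderivative
`arctan ∘ sinh`, and `∫ sech³ = π / 2`.
-/

open Real Filter Topology

namespace Real

lemma one_add_sq_div_four_le_cosh (x : ℝ) : 1 + x ^ 2 / 4 ≤ cosh x := by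
  rw [← cosh_abs, ← sq_abs, cosh_eq]
  have h₁ := quadratic_le_exp_of_nonneg (abs_nonneg x)
  have h₂ := add_one_le_exp (-|x|)
  linarith

lemma abs_sinh_le_cosh (x : ℝ) : |sinh x| ≤ cosh x :=
  abs_le_of_sq_le_sq (by rw [sinh_sq]; linarith) (cosh_pos x).le

lemma tendsto_cosh_atTop : Tendsto cosh atTop atTop :=
  tendsto_atTop_mono (fun x => (sinh_lt_cosh x).le) sinhOrderIso.tendsto_atTop

lemma tendsto_cosh_atBot : Tendsto cosh atBot atTop := by
  simpa [Function.comp_def] using tendsto_cosh_atTop.comp tendsto_neg_atBot_atTop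

lemma integrable_inv_cosh_pow {n : ℕ} (hn : n ≠ 0) : Integrable fun x => (cosh x ^ n)⁻¹ := by
  refine (integrable_inv_one_add_sq.const_mul 4).mono'
    ((continuous_cosh.pow n).inv₀ fun x => pow_ne_zero n (cosh_pos x).ne').aestronglyMeasurable
    (Eventually.of_forall fun x => ?_)
  have hpos : 0 < 1 + x ^ 2 / 4 := by positivity
  calc ‖(cosh x ^ n)⁻¹‖ = (cosh x ^ n)⁻¹ := by
        rw [norm_inv, norm_pow, norm_of_nonneg (cosh_pos x).le]
    _ ≤ (1 + x ^ 2 / 4)⁻¹ :=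
        inv_anti₀ hpos ((one_add_sq_div_four_le_cosh x).trans (le_self_pow₀ (one_le_cosh x) hn))
    _ ≤ 4 * (1 + x ^ 2)⁻¹ := by
        rw [← div_eq_mul_inv, inv_le_comm₀ hpos (by positivity), inv_div]
        linarith [sq_nonneg x]

lemma integrable_inv_cosh : Integrable fun x => (cosh x)⁻¹ := by
  simpa using integrable_inv_cosh_pow one_ne_zero

lemma hasDerivAt_arctan_sinh (x : ℝ) :
    HasDerivAt (fun t => arctan (sinh t)) (cosh x)⁻¹ x := by
  refine ((hasDerivAt_arctan (sinh x)).comp x (hasDerivAt_sinh x)).congr_deriv ?_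
  rw [← cosh_sq']
  field_simp

lemma hasDerivAt_sinh_div_cosh_sq (x : ℝ) :
    HasDerivAt (fun t => sinh t / cosh t ^ 2) (2 * (cosh x ^ 3)⁻¹ - (cosh x)⁻¹) x := by
  refine ((hasDerivAt_sinh x).div ((hasDerivAt_cosh x).pow 2)
    (pow_ne_zero 2 (cosh_pos x).ne')).congr_deriv ?_
  have := (cosh_pos x).ne'
  simp only [Pi.pow_apply]
  field_simp
  linear_combination (-2 * cosh x) * sinh_sq x

lemma tendsto_sinh_div_cosh_sq {l : Filter ℝ} (hl : Tendsto cosh l atTop) :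
    Tendsto (fun t => sinh t / cosh t ^ 2) l (𝓝 0) := by
  refine squeeze_zero_norm (fun t => ?_) (tendsto_inv_atTop_zero.comp hl)
  have hc := cosh_pos t
  rw [norm_div, norm_pow, norm_of_nonneg hc.le, Function.comp_apply, div_le_iff₀ (by positivity)]
  calc ‖sinh t‖ ≤ cosh t := abs_sinh_le_cosh t
    _ = (cosh t)⁻¹ * cosh t ^ 2 := by field_simp

lemma integral_inv_cosh : ∫ x, (cosh x)⁻¹ = π := by
  rw [integral_of_hasDerivAt_of_tendsto hasDerivAt_arctan_sinh integrable_inv_cosh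
    (tendsto_arctan_atBot.mono_right nhdsWithin_le_nhds |>.comp sinhOrderIso.tendsto_atBot)
    (tendsto_arctan_atTop.mono_right nhdsWithin_le_nhds |>.comp sinhOrderIso.tendsto_atTop)]
  ring

/- `sinh / cosh ^ 2` vanishes at `±∞` and has derivative `2 sech³ - sech`, so
`∫ sech³ = (∫ sech) / 2`. -/
lemma integral_inv_cosh_pow_three : ∫ x, (cosh x ^ 3)⁻¹ = π / 2 := by
  have h3 := integrable_inv_cosh_pow (n := 3) three_ne_zero
  have hzero : ∫ x, (2 * (cosh x ^ 3)⁻¹ - (cosh x)⁻¹) = 0 := by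
    rw [integral_of_hasDerivAt_of_tendsto hasDerivAt_sinh_div_cosh_sq
      ((h3.const_mul 2).sub integrable_inv_cosh) (tendsto_sinh_div_cosh_sq tendsto_cosh_atBot)
      (tendsto_sinh_div_cosh_sq tendsto_cosh_atTop), sub_self]
  rw [integral_sub (h3.const_mul 2) integrable_inv_cosh, integral_const_mul,
    integral_inv_cosh] at hzero
  linarith

lemma integral_inv_cosh_mul (μ : ℝ) : ∫ x, (cosh (μ * x))⁻¹ = π / |μ| := by
  rw [Measure.integral_comp_mul_left (fun y => (cosh y)⁻¹), integral_inv_cosh, abs_inv,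
    smul_eq_mul, inv_mul_eq_div]

lemma integral_inv_cosh_mul_pow_three (μ : ℝ) :
    ∫ x, (cosh (μ * x) ^ 3)⁻¹ = π / (2 * |μ|) := by
  rw [Measure.integral_comp_mul_left (fun y => (cosh y ^ 3)⁻¹), integral_inv_cosh_pow_three,
    abs_inv, smul_eq_mul]
  ring

lemma rpow_pow_eq_inv_pow {c r : ℝ} (hc : 0 ≤ c) {n m : ℕ} (h : r * n = -m) :
    (c ^ r) ^ n = (c ^ m)⁻¹ := by
  rw [← rpow_mul_natCast hc, h, rpow_neg hc, rpow_natCast]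

end Real

section CriticalSoliton

variable {lam : ℝ}

lemma criticalSoliton_amplitude_sq (hlam : 0 ≤ lam) :
    ((3 * lam) ^ ((1 : ℝ) / 4)) ^ 2 = √(3 * lam) := by
  rw [← rpow_mul_natCast (by positivity), sqrt_eq_rpow]
  norm_num

lemma criticalSoliton_pow_six (hlam : 0 ≤ lam) (x : ℝ) :
    criticalSoliton lam x ^ 6 = 3 * lam * √(3 * lam) * (cosh (2 * √lam * x) ^ 3)⁻¹ := by
  have hA : ((3 * lam) ^ ((1 : ℝ) / 4)) ^ 6 = 3 * lam * √(3 * lam) := by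
    rw [show 6 = 2 * 3 by rfl, pow_mul, criticalSoliton_amplitude_sq hlam, pow_succ,
      sq_sqrt (by positivity)]
  rw [criticalSoliton, mul_pow, hA, rpow_pow_eq_inv_pow (m := 3) (cosh_pos _).le (by norm_num)]

lemma deriv_criticalSoliton_sq (hlam : 0 ≤ lam) (x : ℝ) :
    deriv (criticalSoliton lam) x ^ 2 =
      √(3 * lam) * lam * ((cosh (2 * √lam * x))⁻¹ - (cosh (2 * √lam * x) ^ 3)⁻¹) := by
  set μ := 2 * √lam
  have hc := cosh_pos (μ * x)
  have hderiv : HasDerivAt (criticalSoliton lam) ((3 * lam) ^ ((1 : ℝ) / 4) *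
      (sinh (μ * x) * μ * (-(1 : ℝ) / 2) * cosh (μ * x) ^ (-(1 : ℝ) / 2 - 1))) x :=
    ((((hasDerivAt_id x).const_mul μ).congr_deriv (mul_one μ) |> (hasDerivAt_cosh _).comp x
      ).rpow_const (Or.inl hc.ne')).const_mul _
  have hμ : μ ^ 2 = 4 * lam := by rw [mul_pow, sq_sqrt hlam]; norm_num
  rw [hderiv.deriv, mul_pow, criticalSoliton_amplitude_sq hlam, mul_pow, mul_pow, mul_pow, hμ,
    rpow_pow_eq_inv_pow (m := 3) hc.le (by norm_num), sinh_sq]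
  field_simp
  ring

end CriticalSoliton

/-- For every `λ > 0`, the critical soliton has zero NLS energy at exponent 6 on ℝ:
`(1/2)∫ (φ_λ')² − (1/6)∫ φ_λ^6 = 0`; in particular `∫ (φ_λ')² = √3 λ π / 4` and
`∫ φ_λ^6 = 3 √3 λ π / 4`. -/
theorem criticalSoliton_energy_zero (lam : ℝ) (hlam : 0 < lam) :
    Integrable (fun x => deriv (criticalSoliton lam) x ^ 2) ∧
    Integrable (fun x => criticalSoliton lam x ^ 6) ∧
    (1 / 2) * (∫ x, deriv (criticalSoliton lam) x ^ 2) -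
      (1 / 6) * (∫ x, criticalSoliton lam x ^ 6) = 0 ∧
    (∫ x, deriv (criticalSoliton lam) x ^ 2) = Real.sqrt 3 * lam * Real.pi / 4 ∧
    (∫ x, criticalSoliton lam x ^ 6) = 3 * Real.sqrt 3 * lam * Real.pi / 4 := by
  set μ := 2 * √lam
  have hroot : 0 < √lam := sqrt_pos.mpr hlam
  have hμ : 0 < μ := by positivity
  have hsq : (fun x => deriv (criticalSoliton lam) x ^ 2) =
      fun x => √(3 * lam) * lam * ((cosh (μ * x))⁻¹ - (cosh (μ * x) ^ 3)⁻¹) :=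
    funext (deriv_criticalSoliton_sq hlam.le)
  have hsix : (fun x => criticalSoliton lam x ^ 6) =
      fun x => 3 * lam * √(3 * lam) * (cosh (μ * x) ^ 3)⁻¹ :=
    funext (criticalSoliton_pow_six hlam.le)
  have h₁ : Integrable fun x => (cosh (μ * x))⁻¹ := integrable_inv_cosh.comp_mul_left' hμ.ne'
  have h₃ : Integrable fun x => (cosh (μ * x) ^ 3)⁻¹ :=
    (integrable_inv_cosh_pow three_ne_zero).comp_mul_left' hμ.ne'
  have hI₂ : ∫ x, deriv (criticalSoliton lam) x ^ 2 = √3 * lam * π / 4 := by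
    rw [hsq, integral_const_mul, integral_sub h₁ h₃, integral_inv_cosh_mul,
      integral_inv_cosh_mul_pow_three, abs_of_pos hμ, sqrt_mul zero_le_three]
    field_simp
    ring
  have hI₆ : ∫ x, criticalSoliton lam x ^ 6 = 3 * √3 * lam * π / 4 := by
    rw [hsix, integral_const_mul, integral_inv_cosh_mul_pow_three, abs_of_pos hμ,
      sqrt_mul zero_le_three]
    field_simp
    ring
  exact ⟨hsq ▸ (h₁.sub h₃).const_mul _, hsix ▸ h₃.const_mul _, by rw [hI₂, hI₆]; ring, hI₂, hI₆⟩
end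

section
/- Let p be a real number with p ≥ 2. There exists a constant K > 0 (depending only on p) such that for every continuously differentiable u : ℝ → ℝ with derivative u', with u and u' square-integrable on ℝ, the function |u|^p is integrable and ∫_ℝ |u(x)|^p dx ≤ K · (∫_ℝ u(x)² dx)^{(p+2)/4} · (∫_ℝ u'(x)² dx)^{(p−2)/4}. (One-dimensional Gagliardo–Nirenberg inequality.) -/
/-!
Since `(u²)' = 2uu'` is integrable, `u²` tends to `0` at `+∞`, so
`u(x)² = -∫_x^∞ 2uu' ≤ 2‖u‖₂‖u'‖₂` by Cauchy–Schwarz. Interpolating this sup bound with the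
`L²` norm, `∫ |u|^p ≤ ‖u²‖_∞^{(p-2)/2} ∫ u²`, gives the inequality with `K = 2^{(p-2)/2}`.
-/

open MeasureTheory Filter Set Topology

theorem integral_abs_mul_le_sqrt_mul_sqrt {α : Type*} [MeasurableSpace α] {μ : Measure α}
    {f g : α → ℝ} (hf : MemLp f 2 μ) (hg : MemLp g 2 μ) :
    ∫ x, |f x * g x| ∂μ ≤ √(∫ x, f x ^ 2 ∂μ) * √(∫ x, g x ^ 2 ∂μ) := by
  have key := integral_mul_le_Lp_mul_Lq_of_nonneg Real.HolderConjugate.two_two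
    (ae_of_all μ fun x => abs_nonneg (f x)) (ae_of_all μ fun x => abs_nonneg (g x))
    (by simpa using hf.norm) (by simpa using hg.norm)
  simpa [abs_mul, Real.sqrt_eq_rpow] using key

theorem abs_rpow_le_rpow_mul_sq {a M p : ℝ} (hp : 2 ≤ p) (ha : a ^ 2 ≤ M) :
    |a| ^ p ≤ M ^ ((p - 2) / 2) * a ^ 2 := by
  have hsplit : |a| ^ p = |a| ^ (p - 2) * a ^ 2 := by
    rw [← sq_abs, ← Real.rpow_natCast, ← Real.rpow_add' (abs_nonneg a) (by norm_num; linarith)]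
    norm_num
  have hM : |a| ^ (p - 2) ≤ M ^ ((p - 2) / 2) := by
    calc |a| ^ (p - 2) = (a ^ 2) ^ ((p - 2) / 2) := by
          rw [← sq_abs, ← Real.rpow_natCast, ← Real.rpow_mul (abs_nonneg a)]; ring_nf
      _ ≤ M ^ ((p - 2) / 2) := Real.rpow_le_rpow (sq_nonneg a) ha (by linarith)
  rw [hsplit]
  exact mul_le_mul_of_nonneg_right hM (sq_nonneg a)

theorem integrable_abs_rpow_and_integral_le_of_sq_le {α : Type*} [MeasurableSpace α]
    {μ : Measure α} {f : α → ℝ} {M p : ℝ} (hp : 2 ≤ p) (hf : AEStronglyMeasurable f μ)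
    (hf2 : Integrable (fun x => f x ^ 2) μ) (hM : ∀ x, f x ^ 2 ≤ M) :
    Integrable (fun x => |f x| ^ p) μ ∧
      ∫ x, |f x| ^ p ∂μ ≤ M ^ ((p - 2) / 2) * ∫ x, f x ^ 2 ∂μ := by
  have hle : ∀ x, |f x| ^ p ≤ M ^ ((p - 2) / 2) * f x ^ 2 := fun x =>
    abs_rpow_le_rpow_mul_sq hp (hM x)
  have hint : Integrable (fun x => |f x| ^ p) μ :=
    (hf2.const_mul _).mono' (hf.aemeasurable.abs.pow_const p).aestronglyMeasurable
      (ae_of_all _ fun x => by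
        rw [Real.norm_eq_abs, abs_of_nonneg (by positivity)]; exact hle x)
  refine ⟨hint, ?_⟩
  rw [← integral_const_mul]
  exact integral_mono hint (hf2.const_mul _) hle

theorem two_mul_sqrt_mul_sqrt_rpow_mul {A B p : ℝ} (hA : 0 ≤ A) (hB : 0 ≤ B) (hp : 2 ≤ p) :
    (2 * √A * √B) ^ ((p - 2) / 2) * A =
      2 ^ ((p - 2) / 2) * A ^ ((p + 2) / 4) * B ^ ((p - 2) / 4) := by
  have hA' : A ^ ((p - 2) / 4) * A = A ^ ((p + 2) / 4) := by
    rw [← Real.rpow_add_one' hA (by linarith)]; ring_nf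
  rw [Real.mul_rpow (by positivity) (Real.sqrt_nonneg B),
    Real.mul_rpow zero_le_two (Real.sqrt_nonneg A), Real.sqrt_eq_rpow, Real.sqrt_eq_rpow, ← Real.rpow_mul hA, ← Real.rpow_mul hB, ← hA']
  ring_nf

theorem sq_le_two_mul_integral_abs_mul_deriv {u u' : ℝ → ℝ} (hu : ∀ x, HasDerivAt u (u' x) x)
    (hu2 : Integrable (fun x => u x ^ 2)) (huu' : Integrable (fun x => u x * u' x)) (x : ℝ) :
    u x ^ 2 ≤ 2 * ∫ y, |u y * u' y| := by
  have hderiv : ∀ y, HasDerivAt (fun y => u y ^ 2) (2 * (u y * u' y)) y := fun y => by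
    simpa [mul_assoc] using (hu y).fun_pow 2
  have hint : Integrable (fun y => 2 * (u y * u' y)) := huu'.const_mul 2
  have hlim : Tendsto (fun y => u y ^ 2) atTop (𝓝 0) :=
    tendsto_zero_of_hasDerivAt_of_integrableOn_Ioi (a := x) (fun y _ => hderiv y)
      hint.integrableOn hu2.integrableOn
  have hftc : ∫ y in Ioi x, 2 * (u y * u' y) = 0 - u x ^ 2 :=
    integral_Ioi_of_hasDerivAt_of_tendsto' (fun y _ => hderiv y) hint.integrableOn hlim
  calc u x ^ 2 = -∫ y in Ioi x, 2 * (u y * u' y) := by rw [hftc]; ring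
    _ ≤ ∫ y in Ioi x, |2 * (u y * u' y)| := (neg_le_abs _).trans abs_integral_le_integral_abs
    _ ≤ ∫ y, |2 * (u y * u' y)| :=
        setIntegral_le_integral hint.abs (ae_of_all _ fun y => abs_nonneg _)
    _ = 2 * ∫ y, |u y * u' y| := by simp only [abs_mul, abs_two, integral_const_mul]

theorem sq_le_two_mul_sqrt_integral_sq_mul_sqrt_integral_deriv_sq {u u' : ℝ → ℝ}
    (hu : ∀ x, HasDerivAt u (u' x) x) (hu2 : MemLp u 2) (hu'2 : MemLp u' 2) (x : ℝ) :
    u x ^ 2 ≤ 2 * √(∫ y, u y ^ 2) * √(∫ y, u' y ^ 2) := by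
  have huu' : Integrable (fun y => u y * u' y) := hu2.integrable_mul hu'2
  have hu2' : Integrable (fun y => u y ^ 2) :=
    (memLp_two_iff_integrable_sq hu2.aestronglyMeasurable).1 hu2
  calc u x ^ 2 ≤ 2 * ∫ y, |u y * u' y| := sq_le_two_mul_integral_abs_mul_deriv hu hu2' huu' x
    _ ≤ 2 * (√(∫ y, u y ^ 2) * √(∫ y, u' y ^ 2)) := by
        gcongr; exact integral_abs_mul_le_sqrt_mul_sqrt hu2 hu'2
    _ = _ := by ring

/-- One-dimensional Gagliardo–Nirenberg inequality: for real `p ≥ 2` there is a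
constant `K > 0` such that for every continuously differentiable `u : ℝ → ℝ` with
`u, u'` square-integrable, `|u|^p` is integrable and
`∫ |u|^p ≤ K (∫ u²)^{(p+2)/4} (∫ (u')²)^{(p−2)/4}`. -/
theorem gagliardo_nirenberg_line (p : ℝ) (hp : 2 ≤ p) :
    ∃ K : ℝ, 0 < K ∧ ∀ u u' : ℝ → ℝ,
      (∀ x, HasDerivAt u (u' x) x) → Continuous u' →
      Integrable (fun x => u x ^ 2) → Integrable (fun x => u' x ^ 2) →
      Integrable (fun x => |u x| ^ p) ∧
        ∫ x, |u x| ^ p ≤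
          K * (∫ x, u x ^ 2) ^ ((p + 2) / 4) * (∫ x, u' x ^ 2) ^ ((p - 2) / 4) := by
  refine ⟨2 ^ ((p - 2) / 2), by positivity, fun u u' hu hu' hu2 hu'2 => ?_⟩
  have hmeas : AEStronglyMeasurable u :=
    (continuous_iff_continuousAt.2 fun x => (hu x).continuousAt).aestronglyMeasurable
  have hsup := sq_le_two_mul_sqrt_integral_sq_mul_sqrt_integral_deriv_sq hu
    ((memLp_two_iff_integrable_sq hmeas).2 hu2)
    ((memLp_two_iff_integrable_sq hu'.aestronglyMeasurable).2 hu'2)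
  obtain ⟨hint, hle⟩ := integrable_abs_rpow_and_integral_le_of_sq_le hp hmeas hu2 hsup
  exact ⟨hint, hle.trans_eq <| two_mul_sqrt_mul_sqrt_rpow_mul
    (integral_nonneg fun x => sq_nonneg _) (integral_nonneg fun x => sq_nonneg _) hp⟩
end
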